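/- Let p and q be primes with p dividing q−1, let G be a finite non-abelian group of order pq with commutator subgroup G' = [G,G] (so |G'| = q), and let S be a sequence over G with π(S) ⊆ G' and |S| ≥ q. Then 1 ∈ Π(S), i.e. S has a nontrivial product-one subsequence. -/

import Mathlib

/-- The set of all products of the terms of the multiset `S` taken in some order. -/
def prodSet {G : Type*} [Group G] (S : Multiset G) : Set G :=
  {g | ∃ l : List G, (l : Multiset G) = S ∧ l.prod = g}

/-- A sequence (multiset) over `G` is a product-one sequence if its terms can be
ordered so that their product is `1`. -/
def IsProductOne {G : Type*} [Group G] (S : Multiset G) : Prop :=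
  (1 : G) ∈ prodSet S

/-- A minimal product-one sequence (atom): a nontrivial product-one sequence that cannot
be partitioned into two nontrivial product-one subsequences. -/
def IsMinimalProductOne {G : Type*} [Group G] (S : Multiset G) : Prop :=
  S ≠ 0 ∧ IsProductOne S ∧
    ¬ ∃ T₁ T₂ : Multiset G, T₁ ≠ 0 ∧ T₂ ≠ 0 ∧ S = T₁ + T₂ ∧
      IsProductOne T₁ ∧ IsProductOne T₂

/-- The small Davenport constant: the maximal length of a sequence over `G` having
no nontrivial product-one subsequence. -/
noncomputable def smallDavenport (G : Type*) [Group G] : ℕ :=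
  sSup {n | ∃ S : Multiset G, Multiset.card S = n ∧
    ∀ T : Multiset G, T ≤ S → T ≠ 0 → ¬ IsProductOne T}

/-- The large Davenport constant: the maximal length of a minimal product-one sequence. -/
noncomputable def largeDavenport (G : Type*) [Group G] : ℕ :=
  sSup {n | ∃ S : Multiset G, Multiset.card S = n ∧ IsMinimalProductOne S}

/-!
Write `G' = [G, G]`; it has prime order `q` and index `p`, and since `G` is not abelian the
centralizer of every `P ∈ G' \ {1}` is `G'`. Suppose `S` has no nontrivial product-one
subsequence, and peel off of `S` blocks `B` that are minimal among the nonempty subsequences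
whose products lie in `G'`. Ordering a block as `g₁ ⋯ gₖ` with product `P`, its `k` cyclic
rotations have products `cᵢ⁻¹ P cᵢ` (`cᵢ = g₁ ⋯ gᵢ`), all in `G' \ {1}`, and these are pairwise
distinct: if two coincide, `cⱼ cᵢ⁻¹` centralizes `P`, so it lies in `G'` and the segment
`gᵢ₊₁ ⋯ gⱼ` is a shorter block. By Cauchy–Davenport in `G' ≅ ℤ/q`, the products of nonempty
subsequences of `S` then fill at least `min q |S|` elements of `G'`, i.e. all of `G'` when
`|S| ≥ q`, so one of them is `1`.
-/

open Subgroup Finset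
open scoped Pointwise

lemma Nat.minFac_mul_of_lt {p q : ℕ} (hp : p.Prime) (hq : q.Prime) (hpq : p < q) :
    (p * q).minFac = p := by
  have hmin := Nat.minFac_prime (Nat.one_lt_mul_iff.2 ⟨hp.pos, hq.pos, Or.inl hp.one_lt⟩).ne'
  have hle : (p * q).minFac ≤ p := Nat.minFac_le_of_dvd hp.two_le (dvd_mul_right p q)
  rcases (Nat.Prime.dvd_mul hmin).1 (Nat.minFac_dvd _) with h | h
  · exact (Nat.prime_dvd_prime_iff_eq hmin hp).1 h
  · have := (Nat.prime_dvd_prime_iff_eq hmin hq).1 h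
    omega

section GroupsOfOrderPQ

variable {G : Type*} [Group G]

lemma exists_normal_card_eq_of_card_eq_mul [Finite G] {p q : ℕ} (hp : p.Prime) (hq : q.Prime)
    (hpq : p < q) (hG : Nat.card G = p * q) :
    ∃ K : Subgroup G, K.Normal ∧ Nat.card K = q ∧ K.index = p := by
  have : Fact q.Prime := ⟨hq⟩
  obtain ⟨g, hg⟩ := exists_prime_orderOf_dvd_card' q (hG ▸ dvd_mul_left q p)
  have hcard : Nat.card (zpowers g) = q := by rw [Nat.card_zpowers, hg]
  have hindex : (zpowers g).index = p := by
    have h := (zpowers g).card_mul_index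
    rw [hcard, hG, mul_comm] at h
    exact Nat.eq_of_mul_eq_mul_right hq.pos h
  refine ⟨zpowers g, normal_of_index_eq_minFac_card ?_, hcard, hindex⟩
  rw [hindex, hG, Nat.minFac_mul_of_lt hp hq hpq]

variable (hna : ¬ ∀ a b : G, a * b = b * a)
include hna

lemma commutator_eq_of_card_prime_of_index_prime {K : Subgroup G} [K.Normal]
    (hK : (Nat.card K).Prime) (hKi : K.index.Prime) : commutator G = K := by
  have : Fact K.index.Prime := ⟨hKi⟩
  let : CommGroup (G ⧸ K) := (isCyclic_of_prime_card (index_eq_card K).symm).commGroup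
  have : Finite K := Nat.finite_of_card_ne_zero hK.ne_zero
  have hle : commutator G ≤ K := by
    simpa using Abelianization.commutator_subset_ker (QuotientGroup.mk' K)
  have hne : commutator G ≠ ⊥ := fun h =>
    hna ((commutator_eq_bot_iff G).1 h).is_comm.comm
  rcases hK.eq_one_or_self_of_dvd _ (card_dvd_of_le hle) with h | h
  · exact absurd (card_eq_one.1 h) hne
  · exact eq_of_le_of_card_ge hle h.ge

lemma centralizer_le_of_card_prime_of_index_prime {N : Subgroup G} [N.Normal]
    (hN : (Nat.card N).Prime) (hNi : N.index.Prime) {P : G} (hP : P ∈ N) (hP1 : P ≠ 1) :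
    centralizer {P} ≤ N := by
  have : Finite N := Nat.finite_of_card_ne_zero hN.ne_zero
  have hzP : zpowers P = N := by
    have hle : zpowers P ≤ N := zpowers_le.2 hP
    rcases hN.eq_one_or_self_of_dvd _ (card_dvd_of_le hle) with h | h
    · exact absurd (zpowers_eq_bot.1 (card_eq_one.1 h)) hP1
    · exact eq_of_le_of_card_ge hle h.ge
  have hNC : N ≤ centralizer {P} := hzP ▸ zpowers_le.2 (mem_centralizer_singleton_iff.2 rfl)
  have hC : centralizer {P} ≠ ⊤ := by
    intro hC
    have hNZ : N ≤ center G := hzP ▸ zpowers_le.2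
      (mem_center_iff.2 fun g => mem_centralizer_singleton_iff.1 (hC ▸ mem_top g))
    have : Fact N.index.Prime := ⟨hNi⟩
    have := isCyclic_of_prime_card (index_eq_card N).symm
    exact hna ((QuotientGroup.mk' N).isMulCommutative_of_isCyclic_of_ker_le_center
      (by simpa using hNZ)).is_comm.comm
  have hCi : (centralizer {P}).index = N.index := by
    rcases hNi.eq_one_or_self_of_dvd _ (index_dvd_of_le hNC) with h | h
    · exact absurd (index_eq_one.1 h) hC
    · exact h
  have h := relIndex_mul_index hNC
  rw [hCi] at h
  exact relIndex_eq_one.1 (Nat.eq_of_mul_eq_mul_right hNi.pos (by simpa using h))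

end GroupsOfOrderPQ

lemma min_le_card_mul_of_card_prime {H : Type*} [Group H] [DecidableEq H] {q : ℕ}
    (hq : q.Prime) (hH : Nat.card H = q) {s t : Finset H} (hs : s.Nonempty) (ht : t.Nonempty) :
    min q (#s + #t - 1) ≤ #(s * t) := by
  have : Fact q.Prime := ⟨hq⟩
  have hmin : (q : ℕ∞) ≤ Monoid.minOrder H := Monoid.le_minOrder.2 fun a ha _ => by
    rw [orderOf_eq_prime (hH ▸ pow_card_eq_one') ha]
  have h := (min_le_min_right _ hmin).trans (cauchy_davenport_minOrder_mul hs ht)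
  rwa [← Nat.mono_cast.map_min, Nat.cast_le] at h

section ProductOneSubsequences

variable {G : Type*} [Group G]

lemma prodSet_add {S T : Multiset G} {x y : G} (hx : x ∈ prodSet S) (hy : y ∈ prodSet T) :
    x * y ∈ prodSet (S + T) := by
  obtain ⟨l, rfl, rfl⟩ := hx
  obtain ⟨m, rfl, rfl⟩ := hy
  exact ⟨l ++ m, rfl, List.prod_append⟩

def abelianProd (S : Multiset G) : Abelianization G := (S.map Abelianization.of).prod

lemma abelianProd_coe (l : List G) : abelianProd (l : Multiset G) = Abelianization.of l.prod := by
  simp [abelianProd, map_list_prod]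

lemma abelianProd_add (S T : Multiset G) : abelianProd (S + T) = abelianProd S * abelianProd T := by
  simp [abelianProd]

lemma abelianProd_eq_one_iff_of_mem_prodSet {S : Multiset G} {g : G} (hg : g ∈ prodSet S) :
    abelianProd S = 1 ↔ g ∈ commutator G := by
  obtain ⟨l, rfl, rfl⟩ := hg
  rw [abelianProd_coe, ← Abelianization.ker_of, MonoidHom.mem_ker]

lemma List.prod_rotate_eq_conj (l : List G) {i : ℕ} (hi : i ≤ l.length) :
    (l.rotate i).prod = (l.take i).prod⁻¹ * l.prod * (l.take i).prod := by
  rw [List.rotate_eq_drop_append_take hi, List.prod_append, ← List.prod_take_mul_prod_drop l i]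
  group

variable (hcent : ∀ P ∈ commutator G, P ≠ 1 → centralizer {P} ≤ commutator G)
include hcent

lemma injOn_prod_rotate {l : List G}
    (hl : Minimal (fun T : Multiset G => T ≠ 0 ∧ abelianProd T = 1) l) (hl1 : l.prod ≠ 1) :
    Set.InjOn (fun i => (l.rotate i).prod) (Set.Iio l.length) := by
  have hP : l.prod ∈ commutator G :=
    (abelianProd_eq_one_iff_of_mem_prodSet ⟨l, rfl, rfl⟩).1 hl.prop.2
  suffices key : ∀ i j, i < j → j < l.length → (l.rotate i).prod ≠ (l.rotate j).prod by
    intro i hi j hj h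
    by_contra hij
    rcases lt_or_gt_of_ne hij with hij | hij
    · exact key i j hij hj h
    · exact key j i hij hi h.symm
  intro i j hij hj h
  set ci := (l.take i).prod
  set cj := (l.take j).prod
  rw [List.prod_rotate_eq_conj l (by omega), List.prod_rotate_eq_conj l hj.le] at h
  have hcomm : cj * ci⁻¹ ∈ centralizer {l.prod} := by
    rw [mem_centralizer_singleton_iff]
    calc cj * ci⁻¹ * l.prod = cj * (ci⁻¹ * l.prod * ci) * ci⁻¹ := by group
      _ = cj * (cj⁻¹ * l.prod * cj) * ci⁻¹ := by rw [h]
      _ = l.prod * (cj * ci⁻¹) := by group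
  set seg := (l.drop i).take (j - i)
  have hcj : cj = ci * seg.prod := by
    rw [← List.prod_append, ← List.take_add, Nat.add_sub_cancel' hij.le]
  have hseg : abelianProd (seg : Multiset G) = 1 := by
    have h1 : Abelianization.of (cj * ci⁻¹) = 1 := by
      rw [← MonoidHom.mem_ker, Abelianization.ker_of]
      exact hcent _ hP hl1 hcomm
    rwa [hcj, map_mul, map_inv, map_mul, mul_inv_cancel_comm, ← abelianProd_coe] at h1
  have hseg_le : (seg : Multiset G) ≤ l :=
    Multiset.coe_le.2 (((l.drop i).take_sublist _).trans (l.drop_sublist i)).subperm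
  have hseg_len : seg.length = j - i := by
    rw [List.length_take, List.length_drop]
    omega
  have hseg0 : (seg : Multiset G) ≠ 0 := by simpa [← List.length_pos_iff, hseg_len]
  have hl_le := Multiset.card_le_card (hl.2 ⟨hseg0, hseg⟩ hseg_le)
  simp only [Multiset.coe_card, hseg_len] at hl_le
  omega

lemma exists_finset_card_eq_prodSet_of_minimal {B : Multiset G}
    (hB : Minimal (fun T : Multiset G => T ≠ 0 ∧ abelianProd T = 1) B) (hB1 : ¬ IsProductOne B) :
    ∃ A : Finset (commutator G), #A = Multiset.card B ∧ ∀ v ∈ A, (v : G) ∈ prodSet B := by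
  classical
  obtain ⟨l, rfl⟩ : ∃ l : List G, (l : Multiset G) = B := ⟨B.toList, Multiset.coe_toList B⟩
  have hrot : ∀ i, (l.rotate i).prod ∈ prodSet (l : Multiset G) :=
    fun i => ⟨l.rotate i, Multiset.coe_eq_coe.2 (l.rotate_perm i), rfl⟩
  have hmem : ∀ i, (l.rotate i).prod ∈ commutator G :=
    fun i => (abelianProd_eq_one_iff_of_mem_prodSet (hrot i)).1 hB.prop.2
  refine ⟨(range l.length).image fun i => ⟨(l.rotate i).prod, hmem i⟩, ?_, ?_⟩
  · rw [card_image_of_injOn, card_range, Multiset.coe_card]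
    intro i hi j hj h
    exact injOn_prod_rotate hcent hB (fun h1 => hB1 ⟨l, rfl, h1⟩) (by simpa using hi)
      (by simpa using hj) (congrArg Subtype.val h)
  · intro v hv
    obtain ⟨i, -, rfl⟩ := mem_image.1 hv
    exact hrot i

lemma exists_finset_card_ge_subseq_prods {q : ℕ} (hq : q.Prime) (hN : Nat.card (commutator G) = q)
    (S : Multiset G) (hno : ∀ T ≤ S, T ≠ 0 → ¬ IsProductOne T) (hS : abelianProd S = 1) :
    ∃ A : Finset (commutator G), min q (Multiset.card S) ≤ #A ∧
      ∀ v ∈ A, ∃ T ≤ S, T ≠ 0 ∧ (v : G) ∈ prodSet T := by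
  classical
  induction S using Multiset.strongInductionOn with
  | ih S ih =>
    rcases eq_or_ne S 0 with rfl | hS0
    · exact ⟨∅, by simp, by simp⟩
    obtain ⟨B, hBS, hB⟩ := exists_minimal_le_of_wellFoundedLT
      (fun T : Multiset G => T ≠ 0 ∧ abelianProd T = 1) S ⟨hS0, hS⟩
    obtain ⟨AB, hAB_card, hAB⟩ :=
      exists_finset_card_eq_prodSet_of_minimal hcent hB (hno B hBS hB.prop.1)
    have hS_eq : S - B + B = S := tsub_add_cancel_of_le hBS
    have hcard : Multiset.card (S - B) = Multiset.card S - Multiset.card B := Multiset.card_sub hBS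
    obtain ⟨A', hA'_card, hA'⟩ := ih (S - B)
      ((lt_add_of_pos_right (S - B) (pos_iff_ne_zero.2 hB.prop.1)).trans_eq hS_eq)
      (fun T hT => hno T (hT.trans tsub_le_self))
      (by simpa [hS_eq, hS, hB.prop.2] using (abelianProd_add (S - B) B).symm)
    rcases A'.eq_empty_or_nonempty with rfl | hA'0
    · refine ⟨AB, ?_, fun v hv => ⟨B, hBS, hB.prop.1, hAB v hv⟩⟩
      have := Multiset.card_le_card hBS
      rw [card_empty] at hA'_card
      have := hq.pos
      omega
    refine ⟨A' * insert 1 AB, ?_, ?_⟩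
    · have h1 : (1 : commutator G) ∉ AB := fun h => hno B hBS hB.prop.1 (hAB 1 h)
      have := min_le_card_mul_of_card_prime hq hN hA'0 (insert_nonempty 1 AB)
      rw [card_insert_of_notMem h1] at this
      omega
    · intro v hv
      obtain ⟨a, ha, b, hb, rfl⟩ := mem_mul.1 hv
      obtain ⟨T, hT, hT0, haT⟩ := hA' a ha
      rcases mem_insert.1 hb with rfl | hb
      · exact ⟨T, hT.trans tsub_le_self, hT0, by simpa using haT⟩
      · refine ⟨T + B, hS_eq ▸ add_le_add_left hT B, by simp [hT0], ?_⟩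
        exact prodSet_add haT (hAB b hb)

theorem exists_isProductOne_of_card_le {q : ℕ} (hq : q.Prime) (hN : Nat.card (commutator G) = q)
    {S : Multiset G} (hS : abelianProd S = 1) (hlen : q ≤ Multiset.card S) :
    ∃ T : Multiset G, T ≤ S ∧ T ≠ 0 ∧ IsProductOne T := by
  by_contra! hno
  obtain ⟨A, hA_card, hA⟩ := exists_finset_card_ge_subseq_prods hcent hq hN S hno hS
  have : Finite (commutator G) := Nat.finite_of_card_ne_zero (hN ▸ hq.ne_zero)
  have : Fintype (commutator G) := Fintype.ofFinite _
  have h1 : (1 : commutator G) ∈ A := by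
    by_contra h1
    have := card_lt_univ_of_notMem h1
    rw [← Nat.card_eq_fintype_card, hN] at this
    omega
  obtain ⟨T, hTS, hT0, hT1⟩ := hA 1 h1
  exact hno T hTS hT0 hT1

end ProductOneSubsequences

theorem stmt11 (p q : ℕ) (hp : p.Prime) (hq : q.Prime) (hpq : p ∣ q - 1)
    (G : Type*) [Group G] [Finite G] (hG : Nat.card G = p * q)
    (hna : ¬ ∀ a b : G, a * b = b * a)
    (S : Multiset G) (hπ : prodSet S ⊆ (commutator G : Set G))
    (hlen : q ≤ Multiset.card S) :
    ∃ T : Multiset G, T ≤ S ∧ T ≠ 0 ∧ IsProductOne T := by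
  have hp_lt : p < q := by
    have := hq.two_le
    have := Nat.le_of_dvd (by omega) hpq
    omega
  obtain ⟨K, hK, hKq, hKp⟩ := exists_normal_card_eq_of_card_eq_mul hp hq hp_lt hG
  have hGK := commutator_eq_of_card_prime_of_index_prime hna (hKq ▸ hq) (hKp ▸ hp)
  have hcent : ∀ P ∈ commutator G, P ≠ 1 → centralizer {P} ≤ commutator G := fun P hP hP1 =>
    hGK ▸ centralizer_le_of_card_prime_of_index_prime hna (hKq ▸ hq) (hKp ▸ hp) (hGK ▸ hP) hP1
  have hS : abelianProd S = 1 := by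
    have hmem : S.toList.prod ∈ prodSet S := ⟨S.toList, Multiset.coe_toList S, rfl⟩
    exact (abelianProd_eq_one_iff_of_mem_prodSet hmem).2 (hπ hmem)
  exact exists_isProductOne_of_card_le hcent hq (hGK ▸ hKq) hS hlen
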